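/- With f: S₄ → {±1} as above and ξ(g₁,g₂) := f(g₂)^{ε(g₁)}, write gᵢ = σᵢhᵢ with σᵢ ∈ S₃, hᵢ ∈ H. Then the coboundary satisfies dξ(g₁,g₂,g₃) = (f(g₂σ₃) f(g₂))^{ε(g₁)} (-1)^{ε(g₁)ε(g₂)ε(h₃)}. In particular, dξ(g₁,g₂,h) = (-1)^{ε(g₁)ε(g₂)ε(h)} for all g₁,g₂ ∈ S₄ and h ∈ H. -/

import Mathlib

open Equiv

abbrev S4 := Equiv.Perm (Fin 4)

/-- the 4-cycle (1234), zero-indexed as (0 1 2 3) -/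
def fourCycle : S4 := Equiv.swap 0 1 * Equiv.swap 1 2 * Equiv.swap 2 3

/-- H = ⟨(1234)⟩ ≤ S₄. -/
def Hsub : Subgroup S4 := Subgroup.zpowers fourCycle

/-- The copy of S₃ inside S₄ as the stabilizer of the last point. -/
def S3sub : Subgroup S4 := MulAction.stabilizer S4 (3 : Fin 4)

/-- ε(g) ∈ {0,1} defined by sgn(g) = (-1)^{ε(g)}. -/
def eps (g : S4) : ℕ := if Equiv.Perm.sign g = 1 then 0 else 1

/-- f₀((1234)^z) = 1 for z = 0,1 and -1 for z = 2,3, as a function on H. -/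
def f0 (g : S4) : ℤ := if g = 1 ∨ g = fourCycle then 1 else -1

/-- the 2-cochain ξ(g₁,g₂) = f(g₂)^{ε(g₁)} -/
def xi (f : S4 → ℤ) (g₁ g₂ : S4) : ℂ := ((f g₂ : ℤ) : ℂ) ^ eps g₁

/-- the coboundary dξ(g₁,g₂,g₃) = ξ(g₂,g₃) ξ(g₁g₂,g₃)⁻¹ ξ(g₁,g₂g₃) ξ(g₁,g₂)⁻¹ -/
noncomputable def dxi (f : S4 → ℤ) (g₁ g₂ g₃ : S4) : ℂ :=
  xi f g₂ g₃ * (xi f (g₁ * g₂) g₃)⁻¹ * xi f g₁ (g₂ * g₃) * (xi f g₁ g₂)⁻¹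

/-!
Since `f` takes values in `{±1}` and `ε` is additive mod 2, the coboundary collapses to
`dξ(g₁,g₂,g₃) = (f(g₃) f(g₂g₃) f(g₂))^{ε(g₁)}`. Writing `g₂σ₃ = σ'h'` with `σ' ∈ S₃`, `h' ∈ H`,
the defining formula for `f` together with the twisted multiplicativity
`f₀(h'h) = f₀(h') f₀(h) (-1)^{ε(h')ε(h)}` on `H` gives
`f(g₂σ₃h₃) f(σ₃h₃) = f(g₂σ₃) (-1)^{ε(g₂)ε(h₃)}`, because `ε(g₂) ≡ ε(σ') + ε(h') + ε(σ₃)`.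
-/

lemma eps_mul (g h : S4) : eps (g * h) = (eps g + eps h) % 2 := by
  unfold eps
  rw [map_mul]
  rcases Int.units_eq_one_or (Perm.sign g) with hg | hg <;>
    rcases Int.units_eq_one_or (Perm.sign h) with hh | hh <;> simp [hg, hh]

lemma eps_inv (g : S4) : eps g⁻¹ = eps g := by
  simp [eps]

lemma pow_eps_mul {M : Type*} [Monoid M] {u : M} (hu : u ^ 2 = 1) (g h : S4) :
    u ^ eps (g * h) = u ^ eps g * u ^ eps h := by
  rw [eps_mul, ← pow_eq_pow_mod _ hu, pow_add]

lemma pow_mul_eps_mul {M : Type*} [Monoid M] {u : M} (hu : u ^ 2 = 1) (n : ℕ) (g h : S4) :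
    u ^ (n * eps (g * h)) = u ^ (n * eps g) * u ^ (n * eps h) := by
  simp only [pow_mul]
  exact pow_eps_mul (by rw [← pow_mul, mul_comm, pow_mul, hu, one_pow]) g h

lemma MulAction.exists_mem_stabilizer_mul_mem {G α : Type*} [Group G] [MulAction G α]
    (H : Subgroup G) [IsPretransitive H α] (a : α) (g : G) :
    ∃ σ ∈ stabilizer G a, ∃ h ∈ H, g = σ * h := by
  obtain ⟨h, hh⟩ := exists_smul_eq H (g⁻¹ • a) a
  have hinv : (h : G)⁻¹ • a = g⁻¹ • a := by
    rw [inv_smul_eq_iff]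
    exact hh.symm
  exact ⟨g * (h : G)⁻¹, by rw [mem_stabilizer_iff, mul_smul, hinv, smul_inv_smul], h, h.2, by group⟩

lemma orderOf_fourCycle : orderOf fourCycle = 4 :=
  orderOf_eq_prime_pow (p := 2) (n := 1) (by decide) (by decide)

instance : MulAction.IsPretransitive Hsub (Fin 4) :=
  MulAction.IsPretransitive.of_orbit (x₀ := 0) fun x =>
    ⟨⟨fourCycle ^ (x : ℕ), pow_mem (Subgroup.mem_zpowers _) _⟩, by revert x; decide⟩

lemma exists_pow_eq_of_mem_Hsub {h : S4} (hh : h ∈ Hsub) :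
    ∃ k : Fin 4, fourCycle ^ (k : ℕ) = h := by
  classical
  obtain ⟨k, hk, rfl⟩ := Finset.mem_image.mp ((mem_zpowers_iff_mem_range_orderOf).mp hh)
  rw [orderOf_fourCycle, Finset.mem_range] at hk
  exact ⟨⟨k, hk⟩, rfl⟩

lemma f0_mul {h h' : S4} (hh : h ∈ Hsub) (hh' : h' ∈ Hsub) :
    f0 (h * h') = f0 h * f0 h' * (-1) ^ (eps h * eps h') := by
  obtain ⟨k, rfl⟩ := exists_pow_eq_of_mem_Hsub hh
  obtain ⟨k', rfl⟩ := exists_pow_eq_of_mem_Hsub hh'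
  clear hh hh'
  revert k k'
  decide

lemma f0_sq (h : S4) : f0 h ^ 2 = 1 := by
  unfold f0
  split_ifs <;> norm_num

lemma dxi_eq_pow_eps {f : S4 → ℤ} (hf : ∀ g, f g ^ 2 = 1) (g₁ g₂ g₃ : S4) :
    dxi f g₁ g₂ g₃ = ((f g₃ * f (g₂ * g₃) * f g₂ : ℤ) : ℂ) ^ eps g₁ := by
  have hsq (g : S4) : (f g : ℂ) ^ 2 = 1 := by exact_mod_cast hf g
  have hinv (g : S4) : (f g : ℂ)⁻¹ = f g := inv_eq_of_mul_eq_one_right (by rw [← sq, hsq])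
  have hsq₂ : ((f g₃ : ℂ) ^ eps g₂) ^ 2 = 1 := by rw [← pow_mul, mul_comm, pow_mul, hsq, one_pow]
  unfold dxi xi
  rw [pow_eps_mul (hsq g₃), mul_inv, ← inv_pow, ← inv_pow, ← inv_pow, hinv, hinv]
  push_cast
  linear_combination ((f g₃ : ℂ) ^ eps g₁ * (f (g₂ * g₃) : ℂ) ^ eps g₁ * (f g₂ : ℂ) ^ eps g₁) * hsq₂

section

variable {f : S4 → ℤ}
  (hdef : ∀ σ ∈ S3sub, ∀ h ∈ Hsub, f (σ * h) = f0 h * (-1) ^ (eps σ * eps h))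
include hdef

lemma sq_apply_eq_one (g : S4) : f g ^ 2 = 1 := by
  obtain ⟨σ, hσ, h, hh, rfl⟩ := MulAction.exists_mem_stabilizer_mul_mem Hsub (3 : Fin 4) g
  rw [hdef σ hσ h hh, mul_pow, f0_sq, one_mul, ← pow_mul, mul_comm, pow_mul, neg_one_sq, one_pow]

lemma apply_mul_mul_apply {σ h : S4} (hσ : σ ∈ S3sub) (hh : h ∈ Hsub) (g : S4) :
    f (g * (σ * h)) * f (σ * h) = f (g * σ) * (-1) ^ (eps g * eps h) := by
  obtain ⟨σ', hσ', h', hh', hfac⟩ :=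
    MulAction.exists_mem_stabilizer_mul_mem Hsub (3 : Fin 4) (g * σ)
  have hg : g = σ' * h' * σ⁻¹ := by rw [← hfac]; group
  rw [← mul_assoc, hfac, mul_assoc, hdef σ' hσ' _ (mul_mem hh' hh), hdef σ hσ h hh,
    hdef σ' hσ' h' hh', f0_mul hh' hh, pow_mul_eps_mul neg_one_sq, mul_comm (eps g), hg,
    pow_mul_eps_mul neg_one_sq, pow_mul_eps_mul neg_one_sq, eps_inv]
  linear_combination (f0 h' * (-1) ^ (eps σ' * eps h') * (-1) ^ (eps σ' * eps h) *
    (-1) ^ (eps h' * eps h) * (-1) ^ (eps σ * eps h)) * f0_sq h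

lemma dxi_mul_eq {σ₃ h₃ : S4} (hσ₃ : σ₃ ∈ S3sub) (hh₃ : h₃ ∈ Hsub) (g₁ g₂ : S4) :
    dxi f g₁ g₂ (σ₃ * h₃) =
      ((f (g₂ * σ₃) * f g₂ : ℤ) : ℂ) ^ eps g₁ * (-1 : ℂ) ^ (eps g₁ * eps g₂ * eps h₃) := by
  rw [dxi_eq_pow_eps (sq_apply_eq_one hdef), mul_comm (f _), apply_mul_mul_apply hdef hσ₃ hh₃]
  push_cast
  ring

end

/-- dξ(g₁,g₂,g₃) = (f(g₂σ₃)f(g₂))^{ε(g₁)} (-1)^{ε(g₁)ε(g₂)ε(h₃)} where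
g₃ = σ₃h₃; in particular dξ(g₁,g₂,h) = (-1)^{ε(g₁)ε(g₂)ε(h)} for h ∈ H. -/
theorem dxi_formula (f : S4 → ℤ)
    (hdef : ∀ σ ∈ S3sub, ∀ h ∈ Hsub, f (σ * h) = f0 h * (-1) ^ (eps σ * eps h)) :
    (∀ g₁ g₂ : S4, ∀ σ₃ ∈ S3sub, ∀ h₃ ∈ Hsub,
      dxi f g₁ g₂ (σ₃ * h₃) =
        ((f (g₂ * σ₃) * f g₂ : ℤ) : ℂ) ^ eps g₁ * (-1 : ℂ) ^ (eps g₁ * eps g₂ * eps h₃)) ∧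
    (∀ g₁ g₂ : S4, ∀ h ∈ Hsub,
      dxi f g₁ g₂ h = (-1 : ℂ) ^ (eps g₁ * eps g₂ * eps h)) := by
  refine ⟨fun g₁ g₂ σ₃ hσ₃ h₃ hh₃ => dxi_mul_eq hdef hσ₃ hh₃ g₁ g₂, fun g₁ g₂ h hh => ?_⟩
  have h₁ := dxi_mul_eq hdef (one_mem S3sub) hh g₁ g₂
  rwa [one_mul, mul_one, ← sq, sq_apply_eq_one hdef, Int.cast_one, one_pow, one_mul] at h₁
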